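/- arXiv:2402.05069 — 3 statements merged into one kernel-verified Lean document; each statement's English description precedes it below -/
import Mathlib

section
/- There is a constant C > 0 (depending only on c) such that for all ε ∈ (0,1] with c√ε < 1 and all t ∈ ℝ, |H_ε(t)| ≤ C + (1/ε²)(1 - a_ε(χ̄(t)) t)², where H_ε is the piecewise primitive defined above, a_ε(0) = 1/(1-c√ε), a_ε(1) = 1, and χ̄(t) = 1 iff t > a*_ε. -/
/-!
Write `l = 1 / (1 - c√ε)` and `A = 2 / (l + 1)`. On each side of `A` the integrand is
`|1 - a s|` for a constant slope `a > 0`, whose primitive from its root `1 / a` has absolute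
value `(1 - a t)² / (2a)`. The threshold `A` is exactly the point where the two branches
`|1 - l s|` and `|1 - s|` agree, so the integrand is continuous. For `t ≤ A` the bound is then
immediate; for `t > A` the primitive differs from the slope-one primitive by two boundary terms
of size at most `(√2/ε)(1 - A)²`, and `1 - A = c√ε / (2 - c√ε)` makes these `O(c²)`.
-/

open Set MeasureTheory intervalIntegral

lemma abs_integral_abs_sub_left (r t : ℝ) : |∫ s in r..t, abs (s - r)| = (t - r) ^ 2 / 2 := by
  rcases le_total r t with hrt | htr
  · have hcongr : ∫ s in r..t, |s - r| = ∫ s in r..t, (s - r) :=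
      integral_congr fun s hs => abs_of_nonneg (sub_nonneg.2 (uIcc_of_le hrt ▸ hs).1)
    rw [hcongr, integral_sub intervalIntegrable_id intervalIntegrable_const, integral_id,
      intervalIntegral.integral_const, smul_eq_mul, abs_of_nonneg (by nlinarith)]
    ring
  · have hcongr : ∫ s in t..r, |s - r| = ∫ s in t..r, (r - s) :=
      integral_congr fun s hs =>
        abs_sub_comm s r ▸ abs_of_nonneg (sub_nonneg.2 (uIcc_of_le htr ▸ hs).2)
    rw [integral_symm, abs_neg, hcongr, integral_sub intervalIntegrable_const intervalIntegrable_id,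
      integral_id, intervalIntegral.integral_const, smul_eq_mul, abs_of_nonneg (by nlinarith)]
    ring

lemma abs_integral_abs_one_sub_mul {a : ℝ} (ha : 0 < a) (t : ℝ) :
    |∫ s in a⁻¹..t, abs (1 - a * s)| = (1 - a * t) ^ 2 / (2 * a) := by
  have hfactor : ∀ s, |1 - a * s| = a * |s - a⁻¹| := fun s => by
    rw [← abs_of_pos ha, ← abs_mul, abs_of_pos ha, ← abs_neg]
    congr 1
    field_simp
    ring
  rw [integral_congr fun s _ => hfactor s, intervalIntegral.integral_const_mul,
    abs_mul, abs_of_pos ha, abs_integral_abs_sub_left]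
  field_simp
  ring

section SwitchedSlope

variable {l A : ℝ}

lemma abs_one_sub_ite_mul_of_le {s : ℝ} (hs : s ≤ A) :
    |1 - (if A < s then 1 else l) * s| = |1 - l * s| := by
  rw [if_neg hs.not_gt]

lemma abs_one_sub_ite_mul_of_ge (hA : |1 - l * A| = |1 - A|) {s : ℝ} (hs : A ≤ s) :
    |1 - (if A < s then 1 else l) * s| = |1 - s| := by
  rcases hs.lt_or_eq with hlt | rfl
  · rw [if_pos hlt, one_mul]
  · rw [if_neg (lt_irrefl _), hA]

lemma continuous_abs_one_sub_ite_mul (hA : |1 - l * A| = |1 - A|) :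
    Continuous fun s => |1 - (if A < s then 1 else l) * s| := by
  have hsplit : (fun s => |1 - (if A < s then 1 else l) * s|) =
      fun s => if s ≤ A then |1 - l * s| else |1 - s| := by
    funext s
    rcases le_or_gt s A with hs | hs
    · rw [if_pos hs, abs_one_sub_ite_mul_of_le hs]
    · rw [if_neg hs.not_ge, abs_one_sub_ite_mul_of_ge hA hs.le]
  rw [hsplit]
  exact Continuous.if_le (by fun_prop) (by fun_prop) continuous_id continuous_const
    fun s hs => by rw [hs, hA]

lemma abs_integral_abs_one_sub_ite_mul_le (hl : 1 ≤ l) (hlA : l⁻¹ ≤ A)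
    (hA : |1 - l * A| = |1 - A|) (t : ℝ) :
    |∫ s in l⁻¹..t, abs (1 - (if A < s then 1 else l) * s)| ≤
      (1 - A) ^ 2 + (1 - (if A < t then 1 else l) * t) ^ 2 / 2 := by
  have hl0 : 0 < l := by linarith
  have hleft : ∀ u ≤ A, ∫ s in l⁻¹..u, |1 - (if A < s then 1 else l) * s| =
      ∫ s in l⁻¹..u, |1 - l * s| := fun u hu =>
    integral_congr fun s hs => abs_one_sub_ite_mul_of_le (hs.2.trans (max_le hlA hu))
  rcases le_or_gt t A with ht | ht
  · rw [if_neg ht.not_gt, hleft t ht, abs_integral_abs_one_sub_mul hl0]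
    have := div_le_div_of_nonneg_left (sq_nonneg (1 - l * t)) two_pos (by linarith : 2 ≤ 2 * l)
    linarith [sq_nonneg (1 - A)]
  · have hint (u v : ℝ) :=
      (continuous_abs_one_sub_ite_mul hA).intervalIntegrable (μ := volume) u v
    have hint' (u v : ℝ) :=
      (by fun_prop : Continuous fun s : ℝ => |1 - s|).intervalIntegrable (μ := volume) u v
    have hright : ∫ s in A..t, |1 - (if A < s then 1 else l) * s| = ∫ s in A..t, |1 - s| :=
      integral_congr fun s hs => abs_one_sub_ite_mul_of_ge hA ((le_min le_rfl ht.le).trans hs.1)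
    have hroot := abs_integral_abs_one_sub_mul one_pos
    simp only [inv_one, one_mul, mul_one] at hroot
    have hsq : (1 - l * A) ^ 2 = (1 - A) ^ 2 := by rw [← sq_abs, hA, sq_abs]
    have := div_le_div_of_nonneg_left (sq_nonneg (1 - l * A)) two_pos (by linarith : 2 ≤ 2 * l)
    rw [if_pos ht, one_mul, ← integral_add_adjacent_intervals (hint l⁻¹ A) (hint A t),
      hleft A le_rfl, hright, ← integral_interval_sub_left (hint' 1 t) (hint' 1 A)]
    calc _ ≤ |∫ s in l⁻¹..A, abs (1 - l * s)| + (|∫ s in (1 : ℝ)..t, abs (1 - s)| +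
          |∫ s in (1 : ℝ)..A, abs (1 - s)|) :=
          (abs_add_le _ _).trans (by gcongr; exact abs_sub _ _)
      _ = (1 - l * A) ^ 2 / (2 * l) + ((1 - t) ^ 2 / 2 + (1 - A) ^ 2 / 2) := by
          rw [abs_integral_abs_one_sub_mul hl0, hroot, hroot]
      _ ≤ _ := by linarith

end SwitchedSlope

lemma abs_one_sub_mul_two_div_add_one {l : ℝ} (hl : l + 1 ≠ 0) :
    |1 - l * (2 / (l + 1))| = |1 - 2 / (l + 1)| := by
  rw [← abs_neg]
  congr 1
  field_simp
  ring

lemma inv_le_two_div_add_one {l : ℝ} (hl : 1 ≤ l) : l⁻¹ ≤ 2 / (l + 1) := by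
  rw [inv_eq_one_div, div_le_div_iff₀ (by linarith) (by linarith)]
  linarith

lemma sq_one_sub_two_div_one_div_add_one_le {δ : ℝ} (h0 : 0 ≤ δ) (h1 : δ < 1) :
    (1 - 2 / (1 / (1 - δ) + 1)) ^ 2 ≤ δ ^ 2 := by
  have h1' : 1 - δ ≠ 0 := by linarith
  have h2 : 2 - δ ≠ 0 := by linarith
  have heq : 1 - 2 / (1 / (1 - δ) + 1) = δ / (2 - δ) := by
    rw [div_add_one h1', div_div_eq_mul_div, show 1 + (1 - δ) = 2 - δ by ring]
    field_simp
    ring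
  rw [heq]
  exact pow_le_pow_left₀ (div_nonneg h0 (by linarith)) (div_le_self h0 (by linarith)) 2

theorem stmt7 (c : ℝ) (hc : 0 < c) :
    ∃ C : ℝ, 0 < C ∧ ∀ ε : ℝ, 0 < ε → ε ≤ 1 → c * Real.sqrt ε < 1 →
      ∀ t : ℝ,
        abs (∫ s in (1 - c * Real.sqrt ε)..t, Real.sqrt 2 / ε *
            abs (1 - (if 2 / (1 / (1 - c * Real.sqrt ε) + 1) < s
                  then 1 else 1 / (1 - c * Real.sqrt ε)) * s)) ≤
          C + 1 / ε ^ 2 *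
            (1 - (if 2 / (1 / (1 - c * Real.sqrt ε) + 1) < t
                  then 1 else 1 / (1 - c * Real.sqrt ε)) * t) ^ 2 := by
  refine ⟨Real.sqrt 2 * c ^ 2, by positivity, fun ε hε hε1 hδ1 t => ?_⟩
  set δ := c * Real.sqrt ε with hδ
  have hδ0 : 0 ≤ δ := by positivity
  have hδsq : δ ^ 2 = c ^ 2 * ε := by rw [hδ, mul_pow, Real.sq_sqrt hε.le]
  set l := 1 / (1 - δ) with hl_def
  have hl : 1 ≤ l := by rw [hl_def, le_div_iff₀ (by linarith)]; linarith
  have hlinv : l⁻¹ = 1 - δ := by rw [hl_def, one_div, inv_inv]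
  have hbound := abs_integral_abs_one_sub_ite_mul_le hl (inv_le_two_div_add_one hl)
    (abs_one_sub_mul_two_div_add_one (by linarith)) t
  have hA := sq_one_sub_two_div_one_div_add_one_le hδ0 hδ1
  have hk : Real.sqrt 2 / ε / 2 ≤ 1 / ε ^ 2 := by
    have : Real.sqrt 2 ≤ 2 := by
      nlinarith [Real.sq_sqrt (zero_le_two : (0 : ℝ) ≤ 2), Real.sqrt_nonneg 2]
    rw [div_div, div_le_div_iff₀ (by positivity) (by positivity)]
    nlinarith
  set q := (1 - (if 2 / (l + 1) < t then 1 else l) * t) ^ 2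
  rw [← hlinv, intervalIntegral.integral_const_mul, abs_mul, abs_of_pos (by positivity)]
  calc _ ≤ Real.sqrt 2 / ε * ((1 - 2 / (l + 1)) ^ 2 + q / 2) :=
        mul_le_mul_of_nonneg_left hbound (by positivity)
    _ = Real.sqrt 2 / ε * (1 - 2 / (l + 1)) ^ 2 + Real.sqrt 2 / ε / 2 * q := by ring
    _ ≤ Real.sqrt 2 / ε * δ ^ 2 + 1 / ε ^ 2 * q := by gcongr
    _ = _ := by rw [hδsq]; field_simp
end

section
/- The total one-dimensional energy of the optimal profile converges to the line-tension constant: one has ∫_{-∞}^0 q_ε'(r)² dr = c²(1-c√ε)/(√2(2-c√ε)²) and ∫_0^∞ q_ε'(r)² dr = c²/(√2(2-c√ε)²), so that the total energy ∫_ℝ [(1/ε²)(1 - a_ε(χ̄(q_ε(r))) q_ε(r))² + (1/2) q_ε'(r)²] dr equals (c²/(√2(2-c√ε)²))(2 - c√ε) = c²/(√2(2-c√ε)), which tends to c²/√8 as ε → 0. -/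
open MeasureTheory Set

lemma aux_hasDerivAt (A B k x : ℝ) :
    HasDerivAt (fun y => A + B * Real.exp (k * y)) (B * k * Real.exp (k * x)) x := by
  have h1 : HasDerivAt (fun y : ℝ => k * y) k x := by
    simpa using (hasDerivAt_id x).const_mul k
  have h2 := (Real.hasDerivAt_exp (k * x)).comp x h1
  have h3 := (h2.const_mul B).const_add A
  rw [show B * k * Real.exp (k * x) = B * (Real.exp (k * x) * k) by ring]
  exact h3

lemma aux_exp_sq (x : ℝ) : Real.exp x ^ 2 = Real.exp (2 * x) := by
  rw [sq, ← Real.exp_add, two_mul]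

lemma aux_int_Ioi {b : ℝ} (hb : 0 < b) :
    ∫ x in Set.Ioi (0:ℝ), Real.exp (-(b * x)) = 1 / b := by
  have := MeasureTheory.integral_comp_mul_left_Ioi (fun y => Real.exp (-y)) 0 hb
  simp only [mul_zero, integral_exp_neg_Ioi, neg_zero, Real.exp_zero, smul_eq_mul,
    mul_one] at this
  rw [this, one_div]

lemma aux_int_Iio {b : ℝ} (hb : 0 < b) :
    ∫ x in Set.Iio (0:ℝ), Real.exp (b * x) = 1 / b := by
  rw [← MeasureTheory.integral_Iic_eq_integral_Iio]
  have := integral_comp_neg_Iic (0:ℝ) (fun y => Real.exp (-(b * y)))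
  simp only [mul_neg, neg_neg, neg_zero] at this
  rw [this, aux_int_Ioi hb]

lemma aux_intOn_Ioi {b : ℝ} (hb : 0 < b) :
    IntegrableOn (fun x => Real.exp (-(b * x))) (Set.Ioi (0:ℝ)) := by
  simpa [neg_mul] using exp_neg_integrableOn_Ioi 0 hb

lemma aux_intOn_Iio {b : ℝ} (hb : 0 < b) :
    IntegrableOn (fun x => Real.exp (b * x)) (Set.Iio (0:ℝ)) := by
  have h2 := (integrable_indicator_iff measurableSet_Ioi).2 (aux_intOn_Ioi hb)
  have h3 := h2.comp_neg
  have h4 : (fun x : ℝ => (Set.Ioi (0:ℝ)).indicator (fun y => Real.exp (-(b * y))) (-x))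
      = (Set.Iio (0:ℝ)).indicator (fun x => Real.exp (b * x)) := by
    funext x
    by_cases hx : x < 0
    · simp [Set.indicator_apply, hx, neg_pos.mpr hx, mul_neg, neg_neg]
    · simp [Set.indicator_apply, hx, not_lt.mpr (neg_nonpos.mpr (not_lt.mp hx))]
  rw [h4] at h3
  exact (integrable_indicator_iff measurableSet_Iio).1 h3

set_option maxHeartbeats 1000000 in
theorem stmt12 (ε c : ℝ) (hε : 0 < ε) (hc : 0 < c) (h : c * Real.sqrt ε < 1)
    (astar : ℝ) (hastar : astar = 1 - c * Real.sqrt ε / (2 - c * Real.sqrt ε))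
    (q : ℝ → ℝ)
    (hq : ∀ r : ℝ, q r =
      if r ≤ 0 then
        (1 - c * Real.sqrt ε) + (1 - c * Real.sqrt ε) * c * Real.sqrt ε / (2 - c * Real.sqrt ε)
          * Real.exp (Real.sqrt 2 * r / (ε * (1 - c * Real.sqrt ε)))
      else
        1 - c * Real.sqrt ε / (2 - c * Real.sqrt ε) * Real.exp (-(Real.sqrt 2) * r / ε)) :
    (∫ r in Set.Iio (0:ℝ), (deriv q r) ^ 2)
        = c ^ 2 * (1 - c * Real.sqrt ε) / (Real.sqrt 2 * (2 - c * Real.sqrt ε) ^ 2) ∧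
    (∫ r in Set.Ioi (0:ℝ), (deriv q r) ^ 2)
        = c ^ 2 / (Real.sqrt 2 * (2 - c * Real.sqrt ε) ^ 2) ∧
    (∫ r : ℝ, (1 / ε ^ 2 *
          (1 - (if astar < q r then 1 else 1 / (1 - c * Real.sqrt ε)) * q r) ^ 2
        + 1 / 2 * (deriv q r) ^ 2))
        = c ^ 2 / (Real.sqrt 2 * (2 - c * Real.sqrt ε)) ∧
    Filter.Tendsto (fun e : ℝ => c ^ 2 / (Real.sqrt 2 * (2 - c * Real.sqrt e)))
      (nhdsWithin 0 (Set.Ioi 0)) (nhds (c ^ 2 / Real.sqrt 8)) := by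
  set s := c * Real.sqrt ε with hs_def
  have hs0 : 0 < s := mul_pos hc (Real.sqrt_pos.2 hε)
  have h1s : (0:ℝ) < 1 - s := by linarith
  have h2s : (0:ℝ) < 2 - s := by linarith
  have hsq : s ^ 2 = c ^ 2 * ε := by
    rw [hs_def, mul_pow, Real.sq_sqrt hε.le]
  have hr2 : (0:ℝ) < Real.sqrt 2 := Real.sqrt_pos.2 (by norm_num)
  have hr2sq : Real.sqrt 2 ^ 2 = 2 := Real.sq_sqrt (by norm_num)
  set k := Real.sqrt 2 / (ε * (1 - s)) with hk_def
  have hk : 0 < k := div_pos hr2 (mul_pos hε h1s)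
  set m := Real.sqrt 2 / ε with hm_def
  have hm : 0 < m := div_pos hr2 hε
  set B := (1 - s) * s / (2 - s) with hB_def
  have hB : 0 < B := div_pos (mul_pos h1s hs0) h2s
  set D := s / (2 - s) with hD_def
  clear_value s k m B D
  have hD : 0 < D := hD_def ▸ div_pos hs0 h2s
  -- closed forms for q on each side
  have hqneg : ∀ y : ℝ, y ≤ 0 → q y = (1 - s) + B * Real.exp (k * y) := by
    intro y hy
    rw [hq y, if_pos hy,
      show Real.sqrt 2 * y / (ε * (1 - s)) = k * y by rw [hk_def, div_mul_eq_mul_div],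
      hB_def, hs_def]
    ring
  have hqpos : ∀ y : ℝ, 0 < y → q y = 1 + (-D) * Real.exp ((-m) * y) := by
    intro y hy
    rw [hq y, if_neg (not_le.mpr hy),
      show -Real.sqrt 2 * y / ε = (-m) * y by rw [hm_def]; ring, hD_def]
    ring
  -- derivative formulas
  have hd1 : ∀ r : ℝ, r < 0 → deriv q r = B * k * Real.exp (k * r) := by
    intro r hr
    have hev : q =ᶠ[nhds r] fun y => (1 - s) + B * Real.exp (k * y) := by
      filter_upwards [Iio_mem_nhds hr] with y hy
      exact hqneg y (le_of_lt hy)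
    rw [hev.deriv_eq]
    exact (aux_hasDerivAt _ _ _ _).deriv
  have hd2 : ∀ r : ℝ, 0 < r → deriv q r = (-D) * (-m) * Real.exp ((-m) * r) := by
    intro r hr
    have hev : q =ᶠ[nhds r] fun y => 1 + (-D) * Real.exp ((-m) * y) := by
      filter_upwards [Ioi_mem_nhds hr] with y hy
      exact hqpos y hy
    rw [hev.deriv_eq]
    exact (aux_hasDerivAt _ _ _ _).deriv
  -- first integral
  have hI1 : (∫ r in Set.Iio (0:ℝ), (deriv q r) ^ 2)
      = (B * k) ^ 2 * (1 / (2 * k)) := by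
    rw [setIntegral_congr_fun (g := fun r => (B * k) ^ 2 * Real.exp (2 * k * r))
        measurableSet_Iio (fun r hr => by
          rw [hd1 r hr, mul_pow, aux_exp_sq, ← mul_assoc])]
    rw [MeasureTheory.integral_const_mul, aux_int_Iio (by positivity)]
  have hI2 : (∫ r in Set.Ioi (0:ℝ), (deriv q r) ^ 2)
      = (D * m) ^ 2 * (1 / (2 * m)) := by
    rw [setIntegral_congr_fun (g := fun r => (D * m) ^ 2 * Real.exp (-(2 * m * r)))
        measurableSet_Ioi (fun r hr => by
          rw [hd2 r hr, mul_pow, aux_exp_sq,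
            show (2 * ((-m) * r)) = -(2 * m * r) by ring,
            show ((-D) * (-m)) ^ 2 = (D * m) ^ 2 by ring])]
    rw [MeasureTheory.integral_const_mul, aux_int_Ioi (by positivity)]
  have e1 : (B * k) ^ 2 * (1 / (2 * k)) = c ^ 2 * (1 - s) / (Real.sqrt 2 * (2 - s) ^ 2) := by
    rw [hB_def, hk_def]
    field_simp
    linear_combination (s^2) * hr2sq + 2 * hsq
  have e2 : (D * m) ^ 2 * (1 / (2 * m)) = c ^ 2 / (Real.sqrt 2 * (2 - s) ^ 2) := by
    rw [hD_def, hm_def]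
    field_simp
    linear_combination (s^2) * hr2sq + 2 * hsq
  have e3 : (B / (1 - s)) ^ 2 * (1 / ε ^ 2) * (1 / (2 * k))
      = c ^ 2 * (1 - s) / (2 * Real.sqrt 2 * (2 - s) ^ 2) := by
    rw [hB_def, hk_def]
    field_simp
    linear_combination hsq
  have e4 : D ^ 2 * (1 / ε ^ 2) * (1 / (2 * m))
      = c ^ 2 / (2 * Real.sqrt 2 * (2 - s) ^ 2) := by
    rw [hD_def, hm_def]
    field_simp
    linear_combination hsq
  refine ⟨hI1.trans e1, hI2.trans e2, ?_, ?_⟩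
  · -- total energy
    set C1 : ℝ := (B / (1 - s)) ^ 2 * (1 / ε ^ 2) + 1 / 2 * (B * k) ^ 2 with hC1_def
    set C2 : ℝ := D ^ 2 * (1 / ε ^ 2) + 1 / 2 * (D * m) ^ 2 with hC2_def
    set F : ℝ → ℝ := fun r => 1 / ε ^ 2 *
          (1 - (if astar < q r then 1 else 1 / (1 - s)) * q r) ^ 2
        + 1 / 2 * (deriv q r) ^ 2 with hF_def
    clear_value C1 C2 F
    have hFneg : ∀ r : ℝ, r < 0 → F r = C1 * Real.exp (2 * k * r) := by
      intro r hr
      have hcond : ¬ astar < q r := by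
        rw [hqneg r hr.le, hastar]
        have hexp : Real.exp (k * r) ≤ 1 :=
          Real.exp_le_one_iff.mpr (by nlinarith)
        have key : (1 - s) + B = 1 - D := by
          rw [hB_def, hD_def]; field_simp; ring
        push_neg
        rw [← key]
        have hle : B * Real.exp (k * r) ≤ B := mul_le_of_le_one_right hB.le hexp
        linarith
      rw [hF_def]
      simp only
      rw [if_neg hcond, hqneg r hr.le, hd1 r hr, hC1_def,
        show (2 * k * r) = 2 * (k * r) by ring, ← aux_exp_sq]
      field_simp
      ring
    have hFpos : ∀ r : ℝ, 0 < r → F r = C2 * Real.exp (-(2 * m * r)) := by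
      intro r hr
      have hcond : astar < q r := by
        rw [hqpos r hr, hastar]
        have hexp : Real.exp ((-m) * r) < 1 :=
          Real.exp_lt_one_iff.mpr (by nlinarith)
        have hlt : (-D) * 1 < (-D) * Real.exp ((-m) * r) := by
          have := mul_lt_mul_of_neg_left hexp (neg_neg_iff_pos.mpr hD : -D < 0)
          linarith [this]
        rw [hD_def] at hlt ⊢
        linarith
      rw [hF_def]
      simp only
      rw [if_pos hcond, hqpos r hr, hd2 r hr, hC2_def,
        show (-(2 * m * r)) = 2 * ((-m) * r) by ring, ← aux_exp_sq]
      field_simp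
      ring
    have hgL : IntegrableOn (fun r => C1 * Real.exp (2 * k * r)) (Set.Iio (0:ℝ)) :=
      (aux_intOn_Iio (by positivity : (0:ℝ) < 2 * k)).const_mul C1
    have hgR : IntegrableOn (fun r => C2 * Real.exp (-(2 * m * r))) (Set.Ioi (0:ℝ)) :=
      (aux_intOn_Ioi (by positivity : (0:ℝ) < 2 * m)).const_mul C2
    have hFL' : IntegrableOn F (Set.Iio (0:ℝ)) :=
      hgL.congr_fun (fun r hr => (hFneg r hr).symm) measurableSet_Iio
    have hFR : IntegrableOn F (Set.Ioi (0:ℝ)) :=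
      hgR.congr_fun (fun r hr => (hFpos r hr).symm) measurableSet_Ioi
    have hrestr : (volume : Measure ℝ).restrict (Set.Iic 0)
        = (volume : Measure ℝ).restrict (Set.Iio 0) :=
      Measure.restrict_congr_set (Iio_ae_eq_Iic).symm
    have hFL : IntegrableOn F (Set.Iic (0:ℝ)) := by
      rw [IntegrableOn, hrestr]; exact hFL'
    have hsplit := intervalIntegral.integral_Iic_add_Ioi (b := (0:ℝ)) (f := F) hFL hFR
    calc (∫ r : ℝ, F r) = (∫ r in Set.Iic (0:ℝ), F r) + ∫ r in Set.Ioi (0:ℝ), F r :=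
          hsplit.symm
      _ = (∫ r in Set.Iio (0:ℝ), F r) + ∫ r in Set.Ioi (0:ℝ), F r := by
          rw [MeasureTheory.integral_Iic_eq_integral_Iio]
      _ = C1 * (1 / (2 * k)) + C2 * (1 / (2 * m)) := by
          rw [setIntegral_congr_fun measurableSet_Iio (fun r hr => hFneg r hr),
            setIntegral_congr_fun measurableSet_Ioi (fun r hr => hFpos r hr),
            MeasureTheory.integral_const_mul, MeasureTheory.integral_const_mul,
            aux_int_Iio (by positivity : (0:ℝ) < 2 * k),
            aux_int_Ioi (by positivity : (0:ℝ) < 2 * m)]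
      _ = (B / (1 - s)) ^ 2 * (1 / ε ^ 2) * (1 / (2 * k)) + 1 / 2 * ((B * k) ^ 2 * (1 / (2 * k)))
            + (D ^ 2 * (1 / ε ^ 2) * (1 / (2 * m)) + 1 / 2 * ((D * m) ^ 2 * (1 / (2 * m)))) := by
          rw [hC1_def, hC2_def]; ring
      _ = c ^ 2 * (1 - s) / (2 * Real.sqrt 2 * (2 - s) ^ 2)
            + 1 / 2 * (c ^ 2 * (1 - s) / (Real.sqrt 2 * (2 - s) ^ 2))
            + (c ^ 2 / (2 * Real.sqrt 2 * (2 - s) ^ 2)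
              + 1 / 2 * (c ^ 2 / (Real.sqrt 2 * (2 - s) ^ 2))) := by
          rw [e1, e2, e3, e4]
      _ = c ^ 2 / (Real.sqrt 2 * (2 - s)) := by
          field_simp
          ring
  · -- tendsto
    have hs8 : Real.sqrt 8 = Real.sqrt 2 * 2 := by
      rw [show (8:ℝ) = 2 * 4 by norm_num, Real.sqrt_mul (by norm_num : (0:ℝ) ≤ 2),
        show (4:ℝ) = 2 ^ 2 by norm_num, Real.sqrt_sq (by norm_num : (0:ℝ) ≤ 2)]
    have hsq0 : Filter.Tendsto (fun e : ℝ => Real.sqrt e) (nhdsWithin 0 (Set.Ioi 0))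
        (nhds 0) := by
      have h0 : Filter.Tendsto (fun e : ℝ => Real.sqrt e) (nhds 0) (nhds 0) := by
        simpa using Real.continuous_sqrt.tendsto 0
      exact h0.mono_left nhdsWithin_le_nhds
    have hden : Filter.Tendsto (fun e : ℝ => Real.sqrt 2 * (2 - c * Real.sqrt e))
        (nhdsWithin 0 (Set.Ioi 0)) (nhds (Real.sqrt 2 * 2)) := by
      have h1 : Filter.Tendsto (fun e : ℝ => 2 - c * Real.sqrt e)
          (nhdsWithin 0 (Set.Ioi 0)) (nhds 2) := by
        have := (hsq0.const_mul c).const_sub 2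
        simpa using this
      simpa using h1.const_mul (Real.sqrt 2)
    have := Filter.Tendsto.div (tendsto_const_nhds (x := c ^ 2)) hden
      (by positivity : Real.sqrt 2 * 2 ≠ 0)
    rw [hs8]
    exact this
end

section
/- For c > 0, ε_k → 0 with c√ε_k < 1, λ_k = 1/(1-c√ε_k), a*_k = 2/(λ_k+1), suppose M_k, χ_k satisfy ∫_Ω ε_k^{-2}(1 - a_k(χ_k)M_k)² dx ≤ Λ where a_k(0)=λ_k, a_k(1)=1. Let χ̄_k := 1_{{M_k > a*_k}}. Then |{χ̄_k ≠ χ_k}| ≤ Λ ε_k (2 - c√ε_k)²/c², so ‖χ̄_k - χ_k‖_{L¹(Ω)} ≤ C ε_k Λ for C = 4/c². -/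
/-!
On the set where the thresholded indicator `1_{M > a*}` disagrees with `χ`, either `χ = 0` and
`M > a*`, so `λ M - 1 > λ a* - 1`, or `χ = 1` and `M ≤ a*`, so `1 - M ≥ 1 - a*`. The threshold
`a* = 2 / (λ + 1)` is chosen so that both gaps equal `s / (2 - s)` with `s = c √ε`. Hence the
energy density is at least `b = ε⁻² (s / (2 - s))²` there, and Markov's inequality bounds the
measure of the disagreement set by `Λ / b = Λ ε (2 - s)² / c²`.
-/

open MeasureTheory

lemma threshold_gaps_eq {s lam a : ℝ} (hs1 : s ≠ 1) (hs2 : s ≠ 2)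
    (hlam : lam = 1 / (1 - s)) (ha : a = 2 / (lam + 1)) :
    1 - a = s / (2 - s) ∧ lam * a - 1 = s / (2 - s) := by
  have h1 : 1 - s ≠ 0 := sub_ne_zero.mpr (Ne.symm hs1)
  have h2 : 2 - s ≠ 0 := sub_ne_zero.mpr (Ne.symm hs2)
  have ha' : a = 2 * (1 - s) / (2 - s) := by
    rw [ha, hlam, show 1 / (1 - s) + 1 = (2 - s) / (1 - s) by field_simp; ring]
    field_simp
  rw [ha', hlam]
  constructor <;> field_simp <;> ring

lemma sq_le_sq_one_sub_of_threshold_ne {lam a q m χ : ℝ} (hlam : 0 ≤ lam) (hq : 0 ≤ q)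
    (hq₀ : q ≤ lam * a - 1) (hq₁ : q ≤ 1 - a) (hχ : χ = 0 ∨ χ = 1)
    (hne : (if a < m then (1 : ℝ) else 0) ≠ χ) :
    q ^ 2 ≤ (1 - (if χ = 0 then lam else 1) * m) ^ 2 := by
  rcases hχ with rfl | rfl
  · have hm : a < m := by by_contra h; simp [h] at hne
    have : lam * a ≤ lam * m := mul_le_mul_of_nonneg_left hm.le hlam
    calc q ^ 2 ≤ (lam * m - 1) ^ 2 := pow_le_pow_left₀ hq (by linarith) 2
      _ = _ := by rw [if_pos rfl]; ring
  · have hm : m ≤ a := by by_contra h; simp [not_le.mp h] at hne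
    rw [if_neg one_ne_zero, one_mul]
    exact pow_le_pow_left₀ hq (by linarith) 2

lemma inv_sq_mul_gap_sq_le {ε s lam a m χ : ℝ} (hs0 : 0 < s) (hs1 : s < 1)
    (hlam : lam = 1 / (1 - s)) (ha : a = 2 / (lam + 1)) (hχ : χ = 0 ∨ χ = 1)
    (hne : (if a < m then (1 : ℝ) else 0) ≠ χ) :
    ε⁻¹ ^ 2 * (s / (2 - s)) ^ 2 ≤ ε⁻¹ ^ 2 * (1 - (if χ = 0 then lam else 1) * m) ^ 2 := by
  have hlam0 : 0 ≤ lam := by rw [hlam]; exact (one_div_pos.mpr (by linarith)).le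
  obtain ⟨hgap₁, hgap₀⟩ := threshold_gaps_eq hs1.ne (by linarith) hlam ha
  refine mul_le_mul_of_nonneg_left ?_ (by positivity)
  exact sq_le_sq_one_sub_of_threshold_ne hlam0 (div_pos hs0 (by linarith)).le
    hgap₀.ge hgap₁.ge hχ hne

lemma div_inv_sq_mul_gap_sq {Λ ε c : ℝ} (hε : 0 < ε) (hc : c ≠ 0) (h2 : c * √ε ≠ 2) :
    Λ / (ε⁻¹ ^ 2 * (c * √ε / (2 - c * √ε)) ^ 2) = Λ * ε * (2 - c * √ε) ^ 2 / c ^ 2 := by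
  have : 2 - c * √ε ≠ 0 := sub_ne_zero.mpr (Ne.symm h2)
  rw [div_pow, mul_pow, Real.sq_sqrt hε.le]
  field_simp

lemma abs_sub_le_div_of_ne {u v F b : ℝ} (hu : u = 0 ∨ u = 1) (hv : v = 0 ∨ v = 1)
    (hb : 0 < b) (hF : 0 ≤ F) (hne : u ≠ v → b ≤ F) : |u - v| ≤ F / b := by
  by_cases huv : u = v
  · rw [huv, sub_self, abs_zero]
    positivity
  · have : |u - v| = 1 := by
      rcases hu with rfl | rfl <;> rcases hv with rfl | rfl <;> norm_num at huv <;> norm_num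
    rw [this, one_le_div hb]
    exact hne huv

lemma measure_le_ofReal_integral_div {α : Type*} [MeasurableSpace α] {μ : Measure α}
    {f : α → ℝ} (hf : Integrable f μ) (hf0 : 0 ≤ f) {b : ℝ} (hb : 0 < b) {S : Set α}
    (hS : ∀ x ∈ S, b ≤ f x) : μ S ≤ ENNReal.ofReal ((∫ x, f x ∂μ) / b) := by
  calc μ S ≤ μ {x | ENNReal.ofReal b ≤ ENNReal.ofReal (f x)} :=
        measure_mono fun x hx => ENNReal.ofReal_le_ofReal (hS x hx)
    _ ≤ (∫⁻ x, ENNReal.ofReal (f x) ∂μ) / ENNReal.ofReal b :=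
        meas_ge_le_lintegral_div hf.aemeasurable.ennreal_ofReal
          (ENNReal.ofReal_pos.mpr hb).ne' ENNReal.ofReal_ne_top
    _ = ENNReal.ofReal ((∫ x, f x ∂μ) / b) := by
        rw [← ofReal_integral_eq_lintegral_ofReal hf (Filter.Eventually.of_forall hf0),
          ENNReal.ofReal_div_of_pos hb]

theorem stmt16_general (d : ℕ) (Ω : Set (EuclideanSpace ℝ (Fin d)))
    (c Λ εk : ℝ) (hc : 0 < c) (hεk : 0 < εk)
    (hcε : c * Real.sqrt εk < 1) (lam astar : ℝ)
    (hlam : lam = 1 / (1 - c * Real.sqrt εk)) (hastar : astar = 2 / (lam + 1))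
    (M χ : EuclideanSpace ℝ (Fin d) → ℝ)
    (hχ01 : ∀ x, χ x = 0 ∨ χ x = 1)
    (hIntegrable : IntegrableOn
      (fun x => εk⁻¹ ^ 2 * (1 - (if χ x = 0 then lam else 1) * M x) ^ 2) Ω volume)
    (hEn : ∫ x in Ω, εk⁻¹ ^ 2 * (1 - (if χ x = 0 then lam else 1) * M x) ^ 2 ≤ Λ) :
    volume {x ∈ Ω | (if astar < M x then (1:ℝ) else 0) ≠ χ x}
      ≤ ENNReal.ofReal (Λ * εk * (2 - c * Real.sqrt εk) ^ 2 / c ^ 2) ∧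
    ∫ x in Ω, |(if astar < M x then (1:ℝ) else 0) - χ x| ≤ 4 / c ^ 2 * εk * Λ := by
  set s := c * Real.sqrt εk
  have hs0 : 0 < s := by positivity
  set f := fun x => εk⁻¹ ^ 2 * (1 - (if χ x = 0 then lam else 1) * M x) ^ 2
  have hf0 : 0 ≤ f := fun x => by positivity
  set b := εk⁻¹ ^ 2 * (s / (2 - s)) ^ 2
  have hb0 : 0 < b := by
    have : 0 < 2 - s := by linarith
    positivity
  have hgap : ∀ x, (if astar < M x then (1 : ℝ) else 0) ≠ χ x → b ≤ f x := fun x hx =>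
    inv_sq_mul_gap_sq_le hs0 hcε hlam hastar (hχ01 x) hx
  have hbound : (∫ x in Ω, f x) / b ≤ Λ * εk * (2 - s) ^ 2 / c ^ 2 :=
    div_inv_sq_mul_gap_sq hεk hc.ne' (by linarith) ▸ div_le_div_of_nonneg_right hEn hb0.le
  have hΛ : 0 ≤ Λ := (integral_nonneg hf0).trans hEn
  refine ⟨?_, ?_⟩
  · calc volume {x ∈ Ω | (if astar < M x then (1 : ℝ) else 0) ≠ χ x}
        ≤ volume.restrict Ω {x ∈ Ω | (if astar < M x then (1 : ℝ) else 0) ≠ χ x} :=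
          (measure_mono (Set.subset_inter subset_rfl (Set.sep_subset _ _))).trans
            (Measure.le_restrict_apply _ _)
      _ ≤ ENNReal.ofReal ((∫ x in Ω, f x) / b) :=
          measure_le_ofReal_integral_div hIntegrable hf0 hb0 fun x hx => hgap x hx.2
      _ ≤ _ := ENNReal.ofReal_le_ofReal hbound
  · have h2s : (2 - s) ^ 2 ≤ 4 := by nlinarith
    calc ∫ x in Ω, |(if astar < M x then (1 : ℝ) else 0) - χ x|
        ≤ ∫ x in Ω, f x / b :=
          integral_mono_of_nonneg (ae_of_all _ fun _ => abs_nonneg _)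
            (hIntegrable.div_const b) (ae_of_all _ fun x =>
              abs_sub_le_div_of_ne (by split_ifs <;> simp) (hχ01 x) hb0 (hf0 x) (hgap x))
      _ = (∫ x in Ω, f x) / b := integral_div b f
      _ ≤ Λ * εk / c ^ 2 * (2 - s) ^ 2 := hbound.trans_eq (by ring)
      _ ≤ Λ * εk / c ^ 2 * 4 := mul_le_mul_of_nonneg_left h2s (by positivity)
      _ = 4 / c ^ 2 * εk * Λ := by ring

theorem stmt16 (d : ℕ) (Ω : Set (EuclideanSpace ℝ (Fin d))) (hΩo : IsOpen Ω)
    (hΩb : Bornology.IsBounded Ω) (c Λ εk : ℝ) (hc : 0 < c) (hεk : 0 < εk)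
    (hcε : c * Real.sqrt εk < 1) (lam astar : ℝ)
    (hlam : lam = 1 / (1 - c * Real.sqrt εk)) (hastar : astar = 2 / (lam + 1))
    (M χ : EuclideanSpace ℝ (Fin d) → ℝ) (hMmeas : Measurable M) (hχmeas : Measurable χ)
    (hχ01 : ∀ x, χ x = 0 ∨ χ x = 1)
    (hIntegrable : IntegrableOn
      (fun x => εk⁻¹ ^ 2 * (1 - (if χ x = 0 then lam else 1) * M x) ^ 2) Ω volume)
    (hEn : ∫ x in Ω, εk⁻¹ ^ 2 * (1 - (if χ x = 0 then lam else 1) * M x) ^ 2 ≤ Λ) :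
    volume {x ∈ Ω | (if astar < M x then (1:ℝ) else 0) ≠ χ x}
      ≤ ENNReal.ofReal (Λ * εk * (2 - c * Real.sqrt εk) ^ 2 / c ^ 2) ∧
    ∫ x in Ω, |(if astar < M x then (1:ℝ) else 0) - χ x| ≤ 4 / c ^ 2 * εk * Λ :=
  stmt16_general d Ω c Λ εk hc hεk hcε lam astar hlam hastar M χ hχ01 hIntegrable hEn
end
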